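/- arXiv:0808.1060 — 2 statements merged into one kernel-verified Lean document; each statement's English description precedes it below -/
import Mathlib

section
/- Let φ_j : Matrix (Fin m_j) ℂ → Matrix (Fin m) ℂ (j = 1,…,N) be unital star-algebra homomorphisms, let p_1,…,p_N ∈ [1,∞), and let C > 0. Suppose the generalized subadditivity of entropy holds: for every density matrix ρ ∈ Matrix (Fin m) ℂ and all density matrices ρ_j satisfying Tr(ρ_j A) = Tr(ρ · φ_j(A)) for all A ∈ Matrix (Fin m_j) ℂ, one has Σ_{j=1}^N (1/p_j) S(ρ_j) ≥ S(ρ) − log C. Then for all Hermitian H_j ∈ Matrix (Fin m_j) ℂ, Tr exp(Σ_{j=1}^N φ_j(H_j)) ≤ C · Π_{j=1}^N (Tr exp(p_j • H_j))^{1/p_j}. -/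
/-!
Let `K = Σⱼ φⱼ(Hⱼ)` and let `ρ = exp K / Tr exp K` be its Gibbs state, for which
`S(ρ) + Tr(ρ K) = log Tr exp K`. Every state on a full matrix algebra is given by a density
matrix, so `ρ` has marginals `ρⱼ` with `Tr(ρⱼ A) = Tr(ρ φⱼ(A))`. The Gibbs variational inequality
`S(σ) + Tr(σ M) ≤ log Tr exp M`, applied to `σ = ρⱼ`, `M = pⱼ Hⱼ` and divided by `pⱼ`, bounds
`S(ρⱼ)/pⱼ + Tr(ρ φⱼ(Hⱼ))` by `log Tr exp(pⱼ Hⱼ) / pⱼ`. Summing over `j` and inserting the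
subadditivity hypothesis gives `log Tr exp K ≤ log C + Σⱼ log Tr exp(pⱼ Hⱼ) / pⱼ`.

In the eigenbases of `σ` and `M`, the variational inequality becomes the classical Gibbs
inequality for the eigenvalue distribution of `σ`, combined with Jensen's inequality for the
doubly stochastic matrix of squared overlaps of the two eigenbases.
-/

open scoped Classical ComplexOrder

/-- The von Neumann entropy `S(ρ) = -Tr(ρ log ρ)` of a Hermitian matrix, computed via the
eigenvalues (with the convention `0 · log 0 = 0`, since `Real.log 0 = 0`). -/
noncomputable def vNEntropy {X : Type*} [Fintype X] [DecidableEq X] (ρ : Matrix X X ℂ) : ℝ :=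
  if h : ρ.IsHermitian then -∑ i, (h.eigenvalues i) * Real.log (h.eigenvalues i) else 0

open scoped Matrix MatrixOrder
open Real Finset

theorem Real.sum_mul_sub_log_le_log_sum_exp {ι : Type*} [Fintype ι] {μ : ι → ℝ}
    (hμ0 : ∀ i, 0 ≤ μ i) (hμ1 : ∑ i, μ i = 1) (x : ι → ℝ) :
    ∑ i, μ i * (x i - log (μ i)) ≤ log (∑ i, exp (x i)) := by
  set Z := ∑ i, exp (x i)
  have hZ : 0 < Z :=
    sum_pos (fun i _ => exp_pos _) (nonempty_of_sum_ne_zero (hμ1 ▸ one_ne_zero))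
  -- `log y ≤ y - 1` at `y = exp (x i) / (Z * μ i)`
  have hterm : ∀ i, μ i * (x i - log (μ i)) - μ i * log Z ≤ exp (x i) / Z - μ i := by
    intro i
    rcases (hμ0 i).eq_or_lt with hi | hi
    · rw [← hi]; simp only [zero_mul, sub_zero]; positivity
    have hlog := log_le_sub_one_of_pos (div_pos (exp_pos (x i)) (mul_pos hZ hi))
    rw [log_div (exp_pos _).ne' (mul_pos hZ hi).ne', log_mul hZ.ne' hi.ne', log_exp] at hlog
    have hmul := mul_le_mul_of_nonneg_left hlog hi.le
    have hrhs : μ i * (exp (x i) / (Z * μ i) - 1) = exp (x i) / Z - μ i := by field_simp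
    linarith
  have hsum := sum_le_sum fun i (_ : i ∈ univ) => hterm i
  rw [sum_sub_distrib, sum_sub_distrib, ← sum_mul, ← sum_div, hμ1, div_self hZ.ne'] at hsum
  linarith

theorem Real.le_mul_prod_rpow_of_log_le {ι : Type*} [Fintype ι] {Z C : ℝ} {T w : ι → ℝ}
    (hZ : 0 < Z) (hC : 0 < C) (hT : ∀ i, 0 < T i)
    (h : log Z ≤ log C + ∑ i, w i * log (T i)) : Z ≤ C * ∏ i, T i ^ w i := by
  have hprod : 0 < ∏ i, T i ^ w i := prod_pos fun i _ => rpow_pos_of_pos (hT i) _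
  rw [← log_le_log_iff hZ (mul_pos hC hprod), log_mul hC.ne' hprod.ne',
    log_prod fun i _ => (rpow_pos_of_pos (hT i) _).ne']
  simpa only [log_rpow (hT _)] using h

theorem ConvexOn.sum_comp_mulVec_le_of_mem_doublyStochastic {n : Type*} [Fintype n]
    [DecidableEq n] {s : Set ℝ} {f : ℝ → ℝ} (hf : ConvexOn ℝ s f) {c : Matrix n n ℝ}
    (hc : c ∈ doublyStochastic ℝ n) {x : n → ℝ} (hx : ∀ k, x k ∈ s) :
    ∑ i, f ((c *ᵥ x) i) ≤ ∑ k, f (x k) := calc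
  ∑ i, f ((c *ᵥ x) i) ≤ ∑ i, ∑ k, c i k * f (x k) := sum_le_sum fun i _ => by
    simpa [Matrix.mulVec, dotProduct] using hf.map_sum_le (t := univ) (w := c i) (p := x)
      (fun k _ => nonneg_of_mem_doublyStochastic hc) (sum_row_of_mem_doublyStochastic hc i)
      (fun k _ => hx k)
  _ = ∑ k, f (x k) := by
    rw [sum_comm]
    simp_rw [← sum_mul, sum_col_of_mem_doublyStochastic hc, one_mul]

namespace Matrix

variable {n : Type*} [Fintype n]

theorem nonempty_of_trace_eq_one {A : Matrix n n ℂ} (hA : A.trace = 1) : Nonempty n :=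
  univ_nonempty_iff.mp (nonempty_of_sum_ne_zero (hA ▸ one_ne_zero : A.trace ≠ 0))

variable [DecidableEq n]

theorem normSq_mem_doublyStochastic {U : Matrix n n ℂ} (hU : U ∈ unitaryGroup n ℂ) :
    of (fun i k => Complex.normSq (U i k)) ∈ doublyStochastic ℝ n := by
  have hrow : ∀ i, ∑ k, (Complex.normSq (U i k) : ℂ) = 1 := fun i => by
    simpa [mul_apply, Complex.mul_conj] using
      congrFun (congrFun (mem_unitaryGroup_iff.mp hU) i) i
  have hcol : ∀ k, ∑ i, (Complex.normSq (U i k) : ℂ) = 1 := fun k => by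
    simpa [mul_apply, Complex.normSq_eq_conj_mul_self] using
      congrFun (congrFun (mem_unitaryGroup_iff'.mp hU) k) k
  refine mem_doublyStochastic_iff_sum.mpr
    ⟨fun i k => Complex.normSq_nonneg _, fun i => ?_, fun k => ?_⟩
  · exact_mod_cast hrow i
  · exact_mod_cast hcol k

theorem trace_diagonal_mul_mul_diagonal_mul_star (a b : n → ℂ) (P : Matrix n n ℂ) :
    (diagonal a * P * diagonal b * star P).trace =
      ∑ i, ∑ k, a i * Complex.normSq (P i k) * b k := by
  refine sum_congr rfl fun i _ => ?_
  rw [diag_apply, mul_apply]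
  refine sum_congr rfl fun k _ => ?_
  rw [mul_diagonal, diagonal_mul, star_apply, Complex.star_def, ← Complex.mul_conj]
  ring

theorem exists_trace_mul_eq {R : Type*} [CommSemiring R] (ℓ : Matrix n n R →ₗ[R] R) :
    ∃ σ : Matrix n n R, ∀ A, (σ * A).trace = ℓ A := by
  refine ⟨of fun a b => ℓ (single b a 1), fun A => ?_⟩
  conv_rhs => rw [matrix_eq_sum_single A]
  simp only [map_sum, trace, diag, mul_apply, of_apply]
  rw [sum_comm]
  refine sum_congr rfl fun b _ => sum_congr rfl fun a _ => ?_
  have hsingle : single b a (A b a) = A b a • single b a 1 := by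
    rw [smul_single, smul_eq_mul, mul_one]
  rw [hsingle, map_smul, smul_eq_mul, mul_comm]

theorem PosSemidef.trace_mul_nonneg {A B : Matrix n n ℂ} (hA : A.PosSemidef)
    (hB : B.PosSemidef) : 0 ≤ (A * B).trace := by
  obtain ⟨X, rfl⟩ := CStarAlgebra.nonneg_iff_eq_star_mul_self.mp hA.nonneg
  rw [mul_assoc, trace_mul_comm, star_eq_conjTranspose]
  exact (hB.mul_mul_conjTranspose_same X).trace_nonneg

theorem exists_marginal {m : Type*} [Fintype m] [DecidableEq m]
    (φ : Matrix n n ℂ →⋆ₐ[ℂ] Matrix m m ℂ) {ρ : Matrix m m ℂ} (hρ : ρ.PosSemidef)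
    (hρ1 : ρ.trace = 1) :
    ∃ σ : Matrix n n ℂ, σ.PosSemidef ∧ σ.trace = 1 ∧ ∀ A, (σ * A).trace = (ρ * φ A).trace := by
  obtain ⟨σ, hσ⟩ := exists_trace_mul_eq
    ((traceLinearMap m ℂ ℂ).comp ((LinearMap.mulLeft ℂ ρ).comp φ.toLinearMap))
  simp only [LinearMap.comp_apply, traceLinearMap_apply, LinearMap.mulLeft_apply,
    AlgHom.toLinearMap_apply, StarAlgHom.coe_toAlgHom] at hσ
  have hherm : σ.IsHermitian := by
    refine ext_iff_trace_mul_right.mpr fun A => ?_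
    calc (σᴴ * A).trace = star (σ * Aᴴ).trace := by
          rw [← trace_conjTranspose, conjTranspose_mul, conjTranspose_conjTranspose,
            trace_mul_comm]
      _ = star (ρ * φ (star A)).trace := by rw [hσ, star_eq_conjTranspose]
      _ = (ρ * φ A).trace := by
          rw [map_star, ← trace_conjTranspose, conjTranspose_mul, star_eq_conjTranspose,
            conjTranspose_conjTranspose, hρ.1.eq, trace_mul_comm]
      _ = (σ * A).trace := (hσ A).symm
  refine ⟨σ, posSemidef_iff_dotProduct_mulVec.mpr ⟨hherm, fun x => ?_⟩,
    by simpa [hρ1] using hσ 1, hσ⟩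
  rw [dotProduct_comm, ← trace_vecMulVec, ← mul_vecMulVec, hσ]
  exact hρ.trace_mul_nonneg
    (nonneg_iff_posSemidef.mp (map_nonneg φ (posSemidef_vecMulVec_self_star x).nonneg))

namespace IsHermitian

variable {A B : Matrix n n ℂ}

theorem trace_mul_eq_sum_normSq (hA : A.IsHermitian) (hB : B.IsHermitian) :
    (A * B).trace = ∑ i, ∑ k, (hA.eigenvalues i : ℂ) * Complex.normSq
      ((star (hA.eigenvectorUnitary : Matrix n n ℂ) * hB.eigenvectorUnitary) i k) *
        hB.eigenvalues k := by
  set P := star (hA.eigenvectorUnitary : Matrix n n ℂ) * hB.eigenvectorUnitary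
  have hconj : (A * B).trace = (diagonal (RCLike.ofReal ∘ hA.eigenvalues) * P *
      diagonal (RCLike.ofReal ∘ hB.eigenvalues) * star P).trace := by
    conv_lhs => rw [hA.spectral_theorem, hB.spectral_theorem, Unitary.conjStarAlgAut_apply,
      Unitary.conjStarAlgAut_apply, mul_assoc, mul_assoc, trace_mul_comm]
    simp only [P, star_mul, star_star, mul_assoc]
  rw [hconj, trace_diagonal_mul_mul_diagonal_mul_star]
  rfl

theorem map_eigenvalues_cfc (hA : A.IsHermitian) (f : ℝ → ℝ) (hB : (cfc f A).IsHermitian) :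
    Multiset.map hB.eigenvalues univ.val = Multiset.map (f ∘ hA.eigenvalues) univ.val := by
  have h := hB.roots_charpoly_eq_eigenvalues
  rw [hA.charpoly_cfc_eq, Polynomial.roots_prod _ _
    (by simp [prod_ne_zero_iff, Polynomial.X_sub_C_ne_zero])] at h
  apply Multiset.map_injective Complex.ofReal_injective
  simpa [Multiset.map_map] using h.symm

theorem sum_comp_eigenvalues_cfc (hA : A.IsHermitian) (f g : ℝ → ℝ) (hB : (cfc f A).IsHermitian) :
    ∑ i, g (hB.eigenvalues i) = ∑ i, g (f (hA.eigenvalues i)) := by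
  have h := congrArg (fun s => (s.map g).sum) (hA.map_eigenvalues_cfc f hB)
  simp only [Multiset.map_map] at h
  exact h

theorem trace_cfc (hA : A.IsHermitian) (f : ℝ → ℝ) :
    (cfc f A).trace = ∑ i, (f (hA.eigenvalues i) : ℂ) := by
  have hB : (cfc f A).IsHermitian := (cfc_predicate f A).isHermitian
  have h := congrArg (fun x : ℝ => (x : ℂ)) (hA.sum_comp_eigenvalues_cfc f (fun x => x) hB)
  push_cast at h
  rw [hB.trace_eq_sum_eigenvalues]
  exact h

theorem vNEntropy_cfc (hA : A.IsHermitian) (f : ℝ → ℝ) :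
    vNEntropy (cfc f A) = -∑ i, f (hA.eigenvalues i) * log (f (hA.eigenvalues i)) := by
  have hB : (cfc f A).IsHermitian := (cfc_predicate f A).isHermitian
  rw [vNEntropy, dif_pos hB, hA.sum_comp_eigenvalues_cfc f (fun x => x * log x) hB]

theorem re_trace_exp (hA : A.IsHermitian) :
    (NormedSpace.exp A).trace.re = ∑ i, Real.exp (hA.eigenvalues i) := by
  open scoped Matrix.Norms.L2Operator in
  rw [← CFC.real_exp_eq_normedSpace_exp hA.isSelfAdjoint, hA.trace_cfc, ← Complex.ofReal_sum,
    Complex.ofReal_re]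

theorem re_trace_exp_nonneg (hA : A.IsHermitian) : 0 ≤ (NormedSpace.exp A).trace.re :=
  hA.re_trace_exp ▸ sum_nonneg fun _ _ => (exp_pos _).le

theorem re_trace_exp_pos [Nonempty n] (hA : A.IsHermitian) : 0 < (NormedSpace.exp A).trace.re :=
  hA.re_trace_exp ▸ sum_pos (fun _ _ => exp_pos _) univ_nonempty

theorem exists_vNEntropy_add_re_trace_mul_eq [Nonempty n] (hA : A.IsHermitian) :
    ∃ ρ : Matrix n n ℂ, ρ.PosSemidef ∧ ρ.trace = 1 ∧
      vNEntropy ρ + (ρ * A).trace.re = log (NormedSpace.exp A).trace.re := by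
  set Z := (NormedSpace.exp A).trace.re
  have hZ : 0 < Z := hA.re_trace_exp_pos
  have hZsum : ∑ i, Real.exp (hA.eigenvalues i) = Z := hA.re_trace_exp.symm
  set g : ℝ → ℝ := fun x => Real.exp x / Z
  have hlog : ∀ x, log (g x) = x - log Z := fun x => by
    rw [log_div (Real.exp_pos x).ne' hZ.ne', Real.log_exp]
  refine ⟨cfc g A, nonneg_iff_posSemidef.mp (cfc_nonneg fun x _ => by positivity), ?_, ?_⟩
  · rw [hA.trace_cfc, ← Complex.ofReal_sum, ← sum_div, hZsum, div_self hZ.ne',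
      Complex.ofReal_one]
  · have hmul : cfc g A * A = cfc (fun x => g x * x) A := by
      rw [cfc_mul g (fun x => x) A, cfc_id' ℝ A]
    rw [hmul, hA.trace_cfc, ← Complex.ofReal_sum, Complex.ofReal_re, hA.vNEntropy_cfc]
    simp only [hlog, mul_sub, sum_sub_distrib, ← sum_mul, g, ← sum_div, hZsum, div_self hZ.ne']
    ring

end IsHermitian

theorem vNEntropy_add_re_trace_mul_le {σ M : Matrix n n ℂ} (hσ : σ.PosSemidef)
    (hσ1 : σ.trace = 1) (hM : M.IsHermitian) :
    vNEntropy σ + (σ * M).trace.re ≤ log (NormedSpace.exp M).trace.re := by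
  have hσh : σ.IsHermitian := hσ.1
  -- the overlaps `|⟨uᵢ, vₖ⟩|²` of the two eigenbases form a doubly stochastic matrix
  set c : Matrix n n ℝ := of fun i k => Complex.normSq
    ((star (hσh.eigenvectorUnitary : Matrix n n ℂ) * hM.eigenvectorUnitary) i k)
  have hc : c ∈ doublyStochastic ℝ n :=
    normSq_mem_doublyStochastic (Submonoid.mul_mem _ (Unitary.star_mem (SetLike.coe_mem _))
      (SetLike.coe_mem _))
  have hμ1 : ∑ i, hσh.eigenvalues i = 1 := by
    have h : ((∑ i, hσh.eigenvalues i : ℝ) : ℂ) = 1 := by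
      rw [Complex.ofReal_sum]
      exact hσh.trace_eq_sum_eigenvalues.symm.trans hσ1
    exact_mod_cast h
  have htr : (σ * M).trace.re = ∑ i, hσh.eigenvalues i * (c *ᵥ hM.eigenvalues) i := by
    rw [hσh.trace_mul_eq_sum_normSq hM]
    simp only [← Complex.ofReal_mul, ← Complex.ofReal_sum,
      Complex.ofReal_re, mulVec, dotProduct, mul_sum, c, of_apply, mul_assoc]
  have : Nonempty n := nonempty_of_trace_eq_one hσ1
  rw [vNEntropy, dif_pos hσh, htr, hM.re_trace_exp]
  set μ := hσh.eigenvalues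
  set ν := hM.eigenvalues
  calc -∑ i, μ i * log (μ i) + ∑ i, μ i * (c *ᵥ ν) i
      = ∑ i, μ i * ((c *ᵥ ν) i - log (μ i)) := by
        simp only [mul_sub, sum_sub_distrib]; ring
    _ ≤ log (∑ i, exp ((c *ᵥ ν) i)) :=
        sum_mul_sub_log_le_log_sum_exp hσ.eigenvalues_nonneg hμ1 _
    _ ≤ log (∑ k, exp (ν k)) :=
        log_le_log (sum_pos (fun _ _ => exp_pos _) univ_nonempty)
          (convexOn_exp.sum_comp_mulVec_le_of_mem_doublyStochastic hc fun _ => Set.mem_univ _)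

theorem inv_mul_vNEntropy_add_re_trace_mul_le {σ H : Matrix n n ℂ} (hσ : σ.PosSemidef)
    (hσ1 : σ.trace = 1) (hH : H.IsHermitian) {t : ℝ} (ht : 0 < t) :
    t⁻¹ * vNEntropy σ + (σ * H).trace.re ≤ t⁻¹ * log (NormedSpace.exp (t • H)).trace.re := by
  have h := vNEntropy_add_re_trace_mul_le hσ hσ1 (hH.smul (IsSelfAdjoint.all t))
  rw [Matrix.mul_smul, trace_smul, Complex.smul_re, smul_eq_mul] at h
  have h' := mul_le_mul_of_nonneg_left h (inv_nonneg.mpr ht.le)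
  rwa [mul_add, ← mul_assoc t⁻¹ t, inv_mul_cancel₀ ht.ne', one_mul] at h'

end Matrix

/-- If the generalized subadditivity of entropy `Σ_j (1/p_j) S(ρ_j) ≥ S(ρ) - log C` holds
for every density matrix `ρ` with marginals `ρ_j`, then the non-commutative Brascamp–Lieb
inequality `Tr exp (Σ_j φ_j(H_j)) ≤ C · Π_j (Tr exp (p_j • H_j))^{1/p_j}` holds for all
Hermitian `H_j`. -/
theorem brascamp_lieb_of_subadditivity_of_entropy {N m : ℕ} (mj : Fin N → ℕ)
    (φ : ∀ j, Matrix (Fin (mj j)) (Fin (mj j)) ℂ →⋆ₐ[ℂ] Matrix (Fin m) (Fin m) ℂ)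
    (p : Fin N → ℝ) (hp : ∀ j, 1 ≤ p j) (C : ℝ) (hC : 0 < C)
    (hSA : ∀ ρ : Matrix (Fin m) (Fin m) ℂ, ρ.PosSemidef → ρ.trace = 1 →
      ∀ ρj : ∀ j, Matrix (Fin (mj j)) (Fin (mj j)) ℂ,
        (∀ j, (ρj j).PosSemidef) → (∀ j, (ρj j).trace = 1) →
        (∀ j, ∀ A : Matrix (Fin (mj j)) (Fin (mj j)) ℂ,
          (ρj j * A).trace = (ρ * φ j A).trace) →
        ∑ j, (1 / p j) * vNEntropy (ρj j) ≥ vNEntropy ρ - Real.log C)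
    (H : ∀ j, Matrix (Fin (mj j)) (Fin (mj j)) ℂ) (hH : ∀ j, (H j).IsHermitian) :
    (NormedSpace.exp (∑ j, φ j (H j))).trace.re ≤
      C * ∏ j, ((NormedSpace.exp (p j • H j)).trace.re) ^ (1 / p j) := by
  have hpH : ∀ j, (p j • H j).IsHermitian := fun j => (hH j).smul (IsSelfAdjoint.all _)
  rcases isEmpty_or_nonempty (Fin m) with hm | hm
  · rw [Matrix.trace, sum_of_isEmpty, Complex.zero_re]
    exact mul_nonneg hC.le (prod_nonneg fun j _ => rpow_nonneg (hpH j).re_trace_exp_nonneg _)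
  have hK : (∑ j, φ j (H j)).IsHermitian :=
    isSelfAdjoint_sum _ fun j _ => (hH j).isSelfAdjoint.map (φ j)
  obtain ⟨ρ, hρ, hρ1, hgibbs⟩ := hK.exists_vNEntropy_add_re_trace_mul_eq
  choose σ hσ hσ1 hσρ using fun j => Matrix.exists_marginal (φ j) hρ hρ1
  have hklein : ∑ j, ((p j)⁻¹ * vNEntropy (σ j) + (ρ * φ j (H j)).trace.re) ≤
      ∑ j, (p j)⁻¹ * Real.log (NormedSpace.exp (p j • H j)).trace.re :=
    sum_le_sum fun j _ => hσρ j (H j) ▸ Matrix.inv_mul_vNEntropy_add_re_trace_mul_le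
      (hσ j) (hσ1 j) (hH j) (one_pos.trans_le (hp j))
  have hsub := hSA ρ hρ hρ1 σ hσ hσ1 hσρ
  refine le_mul_prod_rpow_of_log_le hK.re_trace_exp_pos hC
    (fun j => have := Matrix.nonempty_of_trace_eq_one (hσ1 j); (hpH j).re_trace_exp_pos) ?_
  rw [sum_add_distrib, ← Complex.re_sum, ← Matrix.trace_sum, ← Matrix.mul_sum] at hklein
  simp only [one_div] at hsub ⊢
  linarith
end

section
/- Let V_1,…,V_N be nonzero subspaces of EuclideanSpace ℝ (Fin n) with orthogonal projections P_1,…,P_N, and let p_1,…,p_N ∈ [1,∞). Suppose there exists a finite constant C such that Σ_{j=1}^N (1/p_j) S(E_{V_j} ρ) ≥ S(ρ) − log C holds for every probability density ρ with respect to γ_n for which all the entropies are finite. Then Σ_{j=1}^N (1/p_j) P_j ≤ I in the Loewner order. (One verifies this using the densities ρ_b(x) = exp(⟨b,x⟩ − |b|²/2), for which S(ρ_b) = −|b|²/2 and S(E_{V_j} ρ_b) = −|P_j b|²/2.) -/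
open MeasureTheory

/-- The standard Gaussian probability measure on `EuclideanSpace ℝ (Fin n)`. -/
noncomputable def stdGaussian (n : ℕ) : Measure (EuclideanSpace ℝ (Fin n)) :=
  volume.withDensity
    (fun x => ENNReal.ofReal ((2 * Real.pi) ^ (-(n : ℝ) / 2) * Real.exp (-‖x‖ ^ 2 / 2)))

/-- The Gaussian marginal of `ρ` on the subspace `V`:
`(E_V ρ)(x) = ∫ ρ(P_V x + (I - P_V) y) dγ_n(y)`. -/
noncomputable def gMarginal {n : ℕ} (V : Submodule ℝ (EuclideanSpace ℝ (Fin n)))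
    (ρ : EuclideanSpace ℝ (Fin n) → ℝ) (x : EuclideanSpace ℝ (Fin n)) : ℝ :=
  ∫ y, ρ ((Submodule.orthogonalProjectionOnto V x : EuclideanSpace ℝ (Fin n)) +
      (y - (Submodule.orthogonalProjectionOnto V y : EuclideanSpace ℝ (Fin n)))) ∂(stdGaussian n)

/-- The entropy `S(ρ) = -∫ ρ log ρ dγ_n` of a probability density `ρ` with respect to the
standard Gaussian measure. -/
noncomputable def gEntropy {n : ℕ} (ρ : EuclideanSpace ℝ (Fin n) → ℝ) : ℝ :=
  -∫ x, ρ x * Real.log (ρ x) ∂(stdGaussian n)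

/-! The density `ρ_b x = exp (⟪b, x⟫ - ‖b‖² / 2)` is that of the translate of `γ_n` by `b` with
respect to `γ_n` (`stdGaussianDensity (x - b) = stdGaussianDensity x * ρ_b x`), so integrating
against `ρ_b γ_n` is integrating the translate by `b` against `γ_n`. Since `γ_n` is centred this
gives `S(ρ_b) = -‖b‖² / 2`, and splitting `b = P_V b + (b - P_V b)` orthogonally gives
`E_V ρ_b = ρ_{P_V b}`. The hypothesis applied to `ρ_{t b}` then reads
`t² (Σ_j p_j⁻¹ ‖P_j b‖² - ‖b‖²) ≤ 2 log C` for every real `t`, which forces the bracket to be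
nonpositive. -/

open Real
open scoped RealInnerProductSpace

variable {n : ℕ}

local notation "E" => EuclideanSpace ℝ (Fin n)

noncomputable def stdGaussianDensity (x : E) : ℝ :=
  (2 * π) ^ (-(n : ℝ) / 2) * exp (-‖x‖ ^ 2 / 2)

noncomputable def shiftDensity (b x : E) : ℝ := exp (⟪b, x⟫ - ‖b‖ ^ 2 / 2)

lemma stdGaussianDensity_pos (x : E) : 0 < stdGaussianDensity x := by
  unfold stdGaussianDensity; positivity

lemma measurable_ofReal_stdGaussianDensity :
    Measurable fun x : E => ENNReal.ofReal (stdGaussianDensity x) := by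
  unfold stdGaussianDensity; fun_prop

lemma stdGaussian_eq_withDensity :
    stdGaussian n = volume.withDensity (fun x => ENNReal.ofReal (stdGaussianDensity x)) := rfl

lemma integral_stdGaussian (f : E → ℝ) :
    ∫ x, f x ∂(stdGaussian n) = ∫ x, stdGaussianDensity x * f x := by
  rw [stdGaussian_eq_withDensity, integral_withDensity_eq_integral_toReal_smul
    measurable_ofReal_stdGaussianDensity (.of_forall fun _ => ENNReal.ofReal_lt_top)]
  simp [ENNReal.toReal_ofReal (stdGaussianDensity_pos _).le]

lemma integrable_stdGaussian_iff (f : E → ℝ) :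
    Integrable f (stdGaussian n) ↔ Integrable (fun x => stdGaussianDensity x * f x) := by
  rw [stdGaussian_eq_withDensity, integrable_withDensity_iff_integrable_smul'
    measurable_ofReal_stdGaussianDensity (.of_forall fun _ => ENNReal.ofReal_lt_top)]
  simp [ENNReal.toReal_ofReal (stdGaussianDensity_pos _).le]

lemma integral_stdGaussianDensity : ∫ x, stdGaussianDensity (n := n) x = 1 := by
  have h := GaussianFourier.integral_rexp_neg_mul_sq_norm (V := E) (by norm_num : (0 : ℝ) < 1 / 2)
  have hsq : ∀ x : E, -‖x‖ ^ 2 / 2 = -(1 / 2) * ‖x‖ ^ 2 := fun x => by ring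
  simp only [stdGaussianDensity, integral_const_mul, hsq, h, finrank_euclideanSpace_fin]
  rw [show π / (1 / 2) = 2 * π by ring, ← rpow_add (by positivity), neg_div, neg_add_cancel,
    rpow_zero]

lemma integrable_stdGaussianDensity : Integrable (stdGaussianDensity (n := n)) :=
  .of_integral_ne_zero (by simp [integral_stdGaussianDensity])

instance isProbabilityMeasure_stdGaussian : IsProbabilityMeasure (stdGaussian n) := by
  constructor
  rw [stdGaussian_eq_withDensity, withDensity_apply _ MeasurableSet.univ, Measure.restrict_univ,
    ← ofReal_integral_eq_lintegral_ofReal integrable_stdGaussianDensity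
      (.of_forall fun x => (stdGaussianDensity_pos x).le), integral_stdGaussianDensity,
    ENNReal.ofReal_one]

lemma stdGaussianDensity_neg (x : E) : stdGaussianDensity (-x) = stdGaussianDensity x := by
  simp [stdGaussianDensity]

lemma stdGaussianDensity_sub (b x : E) :
    stdGaussianDensity (x - b) = stdGaussianDensity x * shiftDensity b x := by
  rw [stdGaussianDensity, shiftDensity, stdGaussianDensity, mul_assoc, ← exp_add,
    norm_sub_sq_real, real_inner_comm]
  ring_nf

lemma integral_shiftDensity_mul (b : E) (f : E → ℝ) :
    ∫ x, shiftDensity b x * f x ∂(stdGaussian n) = ∫ x, f (x + b) ∂(stdGaussian n) := by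
  simp_rw [integral_stdGaussian, ← mul_assoc, ← stdGaussianDensity_sub]
  rw [← integral_add_right_eq_self _ b]
  simp

lemma Integrable.shiftDensity_mul {b : E} {f : E → ℝ}
    (hf : Integrable (fun x => f (x + b)) (stdGaussian n)) :
    Integrable (fun x => shiftDensity b x * f x) (stdGaussian n) := by
  rw [integrable_stdGaussian_iff] at hf ⊢
  simpa [← mul_assoc, ← stdGaussianDensity_sub] using hf.comp_sub_right b

lemma integral_shiftDensity (b : E) : ∫ x, shiftDensity b x ∂(stdGaussian n) = 1 := by
  simpa using integral_shiftDensity_mul b fun _ => 1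

lemma integrable_shiftDensity (b : E) : Integrable (shiftDensity b) (stdGaussian n) := by
  have h := Integrable.shiftDensity_mul (b := b) (f := fun _ => (1 : ℝ)) (integrable_const 1)
  simp only [mul_one] at h
  exact h

lemma integrable_exp_inner (b : E) : Integrable (fun x => exp ⟪b, x⟫) (stdGaussian n) := by
  refine ((integrable_shiftDensity b).const_mul (exp (‖b‖ ^ 2 / 2))).congr (.of_forall fun x => ?_)
  simp [shiftDensity, ← exp_add]

lemma integrable_inner_stdGaussian (b : E) : Integrable (fun x => ⟪b, x⟫) (stdGaussian n) := by
  refine ((integrable_exp_inner b).add (integrable_exp_inner (-b))).mono' (by fun_prop)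
    (.of_forall fun x => ?_)
  simp only [Pi.add_apply, norm_eq_abs, inner_neg_left]
  linarith [add_one_le_exp |⟪b, x⟫|, exp_abs_le ⟪b, x⟫]

lemma integral_inner_stdGaussian (b : E) : ∫ x, ⟪b, x⟫ ∂(stdGaussian n) = 0 := by
  have h := integral_neg_eq_self (fun x => stdGaussianDensity x * ⟪b, x⟫) volume
  simp only [stdGaussianDensity_neg, inner_neg_right, mul_neg, integral_neg] at h
  rw [integral_stdGaussian]
  linarith

lemma shiftDensity_nonneg (b x : E) : 0 ≤ shiftDensity b x := (exp_pos _).le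

lemma measurable_shiftDensity (b : E) : Measurable (shiftDensity b) := by
  unfold shiftDensity; fun_prop

lemma shiftDensity_mul_log (b x : E) :
    shiftDensity b x * log (shiftDensity b x) = shiftDensity b x * (⟪b, x⟫ - ‖b‖ ^ 2 / 2) := by
  rw [shiftDensity, log_exp]

lemma integrable_shiftDensity_mul_log (b : E) :
    Integrable (fun x => shiftDensity b x * log (shiftDensity b x)) (stdGaussian n) := by
  simp_rw [shiftDensity_mul_log]
  refine Integrable.shiftDensity_mul ?_
  simp only [inner_add_right]
  exact ((integrable_inner_stdGaussian b).add (integrable_const _)).sub (integrable_const _)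

lemma gEntropy_shiftDensity (b : E) : gEntropy (shiftDensity b) = -(‖b‖ ^ 2 / 2) := by
  have hshift : ∀ x, ⟪b, x + b⟫ - ‖b‖ ^ 2 / 2 = ⟪b, x⟫ + ‖b‖ ^ 2 / 2 := fun x => by
    rw [inner_add_right, real_inner_self_eq_norm_sq]; ring
  simp_rw [gEntropy, shiftDensity_mul_log, integral_shiftDensity_mul, hshift]
  rw [integral_add (integrable_inner_stdGaussian b) (integrable_const _),
    integral_inner_stdGaussian]
  simp

lemma gMarginal_shiftDensity (V : Submodule ℝ E) (b : E) :
    gMarginal V (shiftDensity b) = shiftDensity (V.starProjection b) := by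
  ext x
  have hsplit : ∀ y, shiftDensity b (V.starProjection x + (y - V.starProjection y)) =
      shiftDensity (V.starProjection b) x * shiftDensity (b - V.starProjection b) y := by
    intro y
    have hpyth := Submodule.norm_sq_eq_add_norm_sq_starProjection b V
    rw [V.starProjection_orthogonal', sub_apply, one_apply_eq_self] at hpyth
    simp only [shiftDensity, ← exp_add, inner_add_right, inner_sub_right, inner_sub_left,
      V.inner_starProjection_left_eq_right]
    congr 1
    linarith
  simp only [gMarginal, ← Submodule.starProjection_apply, hsplit, integral_const_mul,
    integral_shiftDensity, mul_one]

lemma nonpos_of_forall_sq_mul_le {a c : ℝ} (h : ∀ t : ℝ, t ^ 2 * a ≤ c) : a ≤ 0 := by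
  by_contra! ha
  have ht := h (√((|c| + 1) / a))
  rw [sq_sqrt (by positivity), div_mul_cancel₀ _ ha.ne'] at ht
  linarith [le_abs_self c]

theorem gaussian_subadditivity_necessity_general {n N : ℕ}
    (V : Fin N → Submodule ℝ (EuclideanSpace ℝ (Fin n)))
    (p : Fin N → ℝ)
    (C : ℝ)
    (hSA : ∀ ρ : EuclideanSpace ℝ (Fin n) → ℝ, Measurable ρ → (∀ x, 0 ≤ ρ x) →
      (∫ x, ρ x ∂(stdGaussian n) = 1) →
      Integrable (fun x => ρ x * Real.log (ρ x)) (stdGaussian n) →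
      (∀ j, Integrable
        (fun x => gMarginal (V j) ρ x * Real.log (gMarginal (V j) ρ x)) (stdGaussian n)) →
      ∑ j, (1 / p j) * gEntropy (gMarginal (V j) ρ) ≥ gEntropy ρ - Real.log C) :
    ∀ x : EuclideanSpace ℝ (Fin n),
      ∑ j, (1 / p j) * ‖(Submodule.orthogonalProjectionOnto (V j) x : EuclideanSpace ℝ (Fin n))‖ ^ 2 ≤
        ‖x‖ ^ 2 := by
  intro b
  simp only [← Submodule.starProjection_apply]
  refine sub_nonpos.1 (nonpos_of_forall_sq_mul_le (c := 2 * log C) fun t => ?_)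
  have h := hSA (shiftDensity (t • b)) (measurable_shiftDensity _) (shiftDensity_nonneg _)
    (integral_shiftDensity _) (integrable_shiftDensity_mul_log _)
    (fun j => by rw [gMarginal_shiftDensity]; exact integrable_shiftDensity_mul_log _)
  simp only [gMarginal_shiftDensity, gEntropy_shiftDensity, map_smul, norm_smul, mul_pow,
    norm_eq_abs, sq_abs] at h
  have hsum : ∑ j, 1 / p j * -(t ^ 2 * ‖(V j).starProjection b‖ ^ 2 / 2) =
      -(t ^ 2 / 2) * ∑ j, 1 / p j * ‖(V j).starProjection b‖ ^ 2 := by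
    rw [Finset.mul_sum]
    exact Finset.sum_congr rfl fun j _ => by ring
  rw [hsum] at h
  linarith

/-- Necessity of the Loewner condition in the Gaussian subadditivity of entropy: if some
finite constant `C` makes `Σ_j (1/p_j) S(E_{V_j} ρ) ≥ S(ρ) - log C` hold for every
probability density `ρ` with respect to `γ_n` whose entropy integrands are integrable, then
`Σ_j (1/p_j) P_j ≤ I` in the Loewner order. -/
theorem gaussian_subadditivity_necessity {n N : ℕ}
    (V : Fin N → Submodule ℝ (EuclideanSpace ℝ (Fin n)))
    (hV : ∀ j, V j ≠ ⊥)
    (p : Fin N → ℝ) (hp : ∀ j, 1 ≤ p j)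
    (C : ℝ) (hC : 0 < C)
    (hSA : ∀ ρ : EuclideanSpace ℝ (Fin n) → ℝ, Measurable ρ → (∀ x, 0 ≤ ρ x) →
      (∫ x, ρ x ∂(stdGaussian n) = 1) →
      Integrable (fun x => ρ x * Real.log (ρ x)) (stdGaussian n) →
      (∀ j, Integrable
        (fun x => gMarginal (V j) ρ x * Real.log (gMarginal (V j) ρ x)) (stdGaussian n)) →
      ∑ j, (1 / p j) * gEntropy (gMarginal (V j) ρ) ≥ gEntropy ρ - Real.log C) :
    ∀ x : EuclideanSpace ℝ (Fin n),
      ∑ j, (1 / p j) * ‖(Submodule.orthogonalProjectionOnto (V j) x : EuclideanSpace ℝ (Fin n))‖ ^ 2 ≤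
        ‖x‖ ^ 2 :=
  gaussian_subadditivity_necessity_general V p C hSA
end
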